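/- arXiv:2303.10905 — 3 statements merged into one kernel-verified Lean document; each statement's English description precedes it below -/
import Mathlib

section
/- Let A ⊆ B be a non-degenerate inclusion of C*-algebras (A a closed *-subalgebra of B such that every b ∈ B satisfies b ∈ closure(A·b) and b ∈ closure(b·A)). Let M ⊆ B be a slice, i.e., a norm-closed linear subspace consisting of normalisers of A with A·M ⊆ M and M·A ⊆ M. Then m* n ∈ A and m n* ∈ A for all m, n ∈ M; that is, M*M ⊆ A and MM* ⊆ A. -/
open Complex

/-- For a non-degenerate inclusion `A ⊆ B` of C*-algebras and a slice `M ⊆ B`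
(a closed linear subspace of normalisers of `A` with `A·M ⊆ M` and `M·A ⊆ M`), one has
`M*M ⊆ A` and `MM* ⊆ A`. -/
theorem slice_inner_products_in_subalgebra {B : Type*} [NonUnitalCStarAlgebra B]
    (A : NonUnitalStarSubalgebra ℂ B) (hAc : IsClosed (A : Set B))
    (hnd : ∀ b : B, b ∈ closure {x : B | ∃ a ∈ A, x = a * b} ∧
      b ∈ closure {x : B | ∃ a ∈ A, x = b * a})
    (M : Submodule ℂ B) (hMc : IsClosed (M : Set B))
    (hMnorm : ∀ m ∈ M, ∀ a ∈ A, star m * a * m ∈ A ∧ m * a * star m ∈ A)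
    (hAM : ∀ a ∈ A, ∀ m ∈ M, a * m ∈ M)
    (hMA : ∀ m ∈ M, ∀ a ∈ A, m * a ∈ M) :
    ∀ m ∈ M, ∀ n ∈ M, star m * n ∈ A ∧ m * star n ∈ A := by
  -- Polarization: star m * a * n ∈ A
  have key1 : ∀ m ∈ M, ∀ n ∈ M, ∀ a ∈ A, star m * a * n ∈ A := by
    intro m hm n hn a ha
    have hmem : ∀ c : ℂ, star (n + c • m) * a * (n + c • m) ∈ A := fun c =>
      (hMnorm _ (M.add_mem hn (M.smul_mem c hm)) a ha).1
    have e : star m * a * n = (4:ℂ)⁻¹ • ((star (n + (1:ℂ) • m) * a * (n + (1:ℂ) • m))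
        + I • (star (n + I • m) * a * (n + I • m))
        + (-1:ℂ) • (star (n + (-1:ℂ) • m) * a * (n + (-1:ℂ) • m))
        + (-I) • (star (n + (-I) • m) * a * (n + (-I) • m))) := by
      simp only [star_add, star_smul, add_mul, mul_add, smul_mul_assoc, mul_smul_comm,
        smul_smul, smul_add, Complex.star_def, map_one, map_neg, Complex.conj_I]
      match_scalars <;> simp [Complex.I_sq] <;> ring
    rw [e]
    exact SMulMemClass.smul_mem _ (add_mem (add_mem (add_mem (hmem 1)
      (SMulMemClass.smul_mem _ (hmem I))) (SMulMemClass.smul_mem _ (hmem (-1))))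
      (SMulMemClass.smul_mem _ (hmem (-I))))
  -- Polarization: m * a * star n ∈ A
  have key2 : ∀ m ∈ M, ∀ n ∈ M, ∀ a ∈ A, m * a * star n ∈ A := by
    intro m hm n hn a ha
    have hmem : ∀ c : ℂ, (n + c • m) * a * star (n + c • m) ∈ A := fun c =>
      (hMnorm _ (M.add_mem hn (M.smul_mem c hm)) a ha).2
    have e : m * a * star n = (4:ℂ)⁻¹ • (((n + (1:ℂ) • m) * a * star (n + (1:ℂ) • m))
        + (-I) • ((n + I • m) * a * star (n + I • m))
        + (-1:ℂ) • ((n + (-1:ℂ) • m) * a * star (n + (-1:ℂ) • m))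
        + I • ((n + (-I) • m) * a * star (n + (-I) • m))) := by
      simp only [star_add, star_smul, add_mul, mul_add, smul_mul_assoc, mul_smul_comm,
        smul_smul, smul_add, Complex.star_def, map_one, map_neg, Complex.conj_I]
      match_scalars <;> simp [Complex.I_sq] <;> ring
    rw [e]
    exact SMulMemClass.smul_mem _ (add_mem (add_mem (add_mem (hmem 1)
      (SMulMemClass.smul_mem _ (hmem I))) (SMulMemClass.smul_mem _ (hmem (-1))))
      (SMulMemClass.smul_mem _ (hmem (-I))))
  intro m hm n hn
  constructor
  · have h1 : star m * n ∈ closure (A : Set B) := by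
      refine map_mem_closure (continuous_const.mul continuous_id) (hnd n).1 ?_
      rintro x ⟨a, ha, rfl⟩
      show star m * (a * n) ∈ (A : Set B)
      rw [← mul_assoc]
      exact key1 m hm n hn a ha
    rwa [hAc.closure_eq] at h1
  · have hstar : star n ∈ closure {x : B | ∃ a ∈ A, x = a * star n} := by
      refine map_mem_closure continuous_star (hnd n).2 ?_
      rintro x ⟨a, ha, rfl⟩
      exact ⟨star a, star_mem ha, by rw [star_mul]⟩
    have h2 : m * star n ∈ closure (A : Set B) := by
      refine map_mem_closure (continuous_const.mul continuous_id) hstar ?_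
      rintro x ⟨a, ha, rfl⟩
      show m * (a * star n) ∈ (A : Set B)
      rw [← mul_assoc]
      exact key2 m hm n hn a ha
    rwa [hAc.closure_eq] at h2
end

section
/- Let B be a C*-algebra and N ⊆ B a norm-closed linear subspace such that n m* p ∈ N for all n, m, p ∈ N (a ternary ring of operators). Then N equals the closed linear span of {n m* p : n, m, p ∈ N}. -/
/-!
For `n ∈ N` put `a = n⋆ n`. Since `w a = w n⋆ n` for `w ∈ N`, right multiplication by any element
of the non-unital algebra generated by `a` maps `N` into the span of triple products, so `n` times
any element of `C⋆(a)` lies in its closure. Taking `c = a (a + ε)⁻¹` by functional calculus,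
`‖n c - n‖² = ‖a (1 - c)²‖ ≤ ε / 4`, hence `n` lies in that closure too.
-/

theorem mul_mem_of_mem_adjoin {R B : Type*} [CommSemiring R] [NonUnitalSemiring B] [Module R B]
    [IsScalarTower R B B] [SMulCommClass R B B] {M N : Submodule R B} (hMN : M ≤ N) {s : Set B}
    (hs : ∀ w ∈ N, ∀ b ∈ s, w * b ∈ M) {y : B} (hy : y ∈ NonUnitalAlgebra.adjoin R s) :
    ∀ w ∈ N, w * y ∈ M := by
  induction hy using NonUnitalAlgebra.adjoin_induction with
  | mem b hb => exact fun w hw => hs w hw b hb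
  | add y z _ _ hy hz => exact fun w hw => by rw [mul_add]; exact add_mem (hy w hw) (hz w hw)
  | zero => exact fun w _ => by rw [mul_zero]; exact zero_mem M
  | mul y z _ _ hy hz => exact fun w hw => by rw [← mul_assoc]; exact hz _ (hMN (hy w hw))
  | smul r y _ hy => exact fun w hw => by rw [mul_smul_comm]; exact M.smul_mem r (hy w hw)

theorem mul_one_sub_div_add_sq_le {t ε : ℝ} (ht : 0 ≤ t) (hε : 0 < ε) :
    t * (1 - t / (t + ε)) ^ 2 ≤ ε / 4 := by
  have htε : 0 < t + ε := by positivity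
  rw [one_sub_div htε.ne', add_sub_cancel_left, div_pow, mul_div_assoc',
    div_le_div_iff₀ (by positivity) (by norm_num)]
  nlinarith [sq_nonneg (t - ε), mul_pos hε hε]

section CStarAlgebra

variable {A : Type*} [NonUnitalCStarAlgebra A]

theorem star_mul_cfcₙ_sub_self_mul (x : A) {g : ℝ → ℝ}
    (hg : ContinuousOn g (quasispectrum ℝ (star x * x))) (hg0 : g 0 = 0) :
    star (x * cfcₙ g (star x * x) - x) * (x * cfcₙ g (star x * x) - x) =
      cfcₙ (fun t => t * (1 - g t) ^ 2) (star x * x) := by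
  set a := star x * x with ha
  have hc : IsSelfAdjoint (cfcₙ g a) := cfcₙ_predicate g a
  have hac : a * cfcₙ g a = cfcₙ (fun t => t * g t) a := by
    rw [cfcₙ_mul (fun t => t) g a, cfcₙ_id' ℝ a]
  have hca : cfcₙ g a * a = cfcₙ (fun t => g t * t) a := by
    rw [cfcₙ_mul g (fun t => t) a, cfcₙ_id' ℝ a]
  have hcac : cfcₙ g a * (a * cfcₙ g a) = cfcₙ (fun t => g t * (t * g t)) a := by
    rw [hac, cfcₙ_mul g (fun t => t * g t) a]
  calc star (x * cfcₙ g a - x) * (x * cfcₙ g a - x)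
      = cfcₙ g a * (a * cfcₙ g a) - cfcₙ g a * a - (a * cfcₙ g a - a) := by
        rw [star_sub, star_mul, hc.star_eq, ha]; noncomm_ring
    _ = cfcₙ (fun t => g t * (t * g t) - g t * t - (t * g t - t)) a := by
        rw [hcac, hca, hac, cfcₙ_sub (fun t => g t * (t * g t) - g t * t) (fun t => t * g t - t) a,
          cfcₙ_sub (fun t => g t * (t * g t)) (fun t => g t * t) a,
          cfcₙ_sub (fun t => t * g t) (fun t => t) a, cfcₙ_id' ℝ a]
    _ = _ := by congr 1; ext t; ring

theorem mem_closure_mul_elemental_star_mul_self (x : A) :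
    x ∈ closure ((x * ·) '' (NonUnitalStarAlgebra.elemental ℝ (star x * x) : Set A)) := by
  -- `A` carries no order instance; the spectral order makes `star x * x` nonnegative.
  let _ := CStarAlgebra.spectralOrder A
  have := CStarAlgebra.spectralOrderedRing A
  have hσ : ∀ t ∈ quasispectrum ℝ (star x * x), 0 ≤ t :=
    quasispectrum_nonneg_of_nonneg _ (star_mul_self_nonneg x)
  rw [Metric.mem_closure_iff]
  intro δ hδ
  set g : ℝ → ℝ := fun t => t / (t + δ ^ 2)
  have hg : ContinuousOn g (quasispectrum ℝ (star x * x)) :=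
    continuousOn_id.div (continuousOn_id.add continuousOn_const) fun t ht =>
      (add_pos_of_nonneg_of_pos (hσ t ht) (by positivity)).ne'
  have hsq : ‖x * cfcₙ g (star x * x) - x‖ ^ 2 ≤ δ ^ 2 / 4 := by
    rw [sq, ← CStarRing.norm_star_mul_self, star_mul_cfcₙ_sub_self_mul x hg (by simp [g])]
    refine norm_cfcₙ_le fun t ht => ?_
    rw [Real.norm_of_nonneg (mul_nonneg (hσ t ht) (sq_nonneg _))]
    exact mul_one_sub_div_add_sq_le (hσ t ht) (by positivity)
  refine ⟨_, ⟨_, cfcₙ_mem_elemental g _, rfl⟩, ?_⟩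
  rw [dist_comm, dist_eq_norm]
  nlinarith [norm_nonneg (x * cfcₙ g (star x * x) - x)]

end CStarAlgebra

/-- A norm-closed linear subspace `N` of a C*-algebra `B` with `N N* N ⊆ N` (a ternary ring
of operators) equals the closed linear span of `{n m* p : n, m, p ∈ N}`. -/
theorem tro_eq_closedSpan_triple_products {B : Type*} [NonUnitalCStarAlgebra B]
    (N : Submodule ℂ B) (hNc : IsClosed (N : Set B))
    (hN : ∀ n ∈ N, ∀ m ∈ N, ∀ p ∈ N, n * star m * p ∈ N) :
    (N : Set B) = closure (Submodule.span ℂ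
      {x : B | ∃ n ∈ N, ∃ m ∈ N, ∃ p ∈ N, x = n * star m * p} : Set B) := by
  set M := Submodule.span ℂ {x : B | ∃ n ∈ N, ∃ m ∈ N, ∃ p ∈ N, x = n * star m * p}
  have hMN : M ≤ N :=
    Submodule.span_le.mpr fun _ ⟨n, hn, m, hm, p, hp, hx⟩ => hx ▸ hN n hn m hm p hp
  refine subset_antisymm (fun n hn => ?_) (closure_minimal hMN hNc)
  have hadjoin : ∀ y ∈ NonUnitalStarAlgebra.adjoin ℝ {star n * n}, n * y ∈ M := by
    intro y hy
    refine mul_mem_of_mem_adjoin (M := M.restrictScalars ℝ) (N := N.restrictScalars ℝ)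
      hMN ?_ hy n hn
    rintro w hw b hb
    obtain rfl : b = star n * n := by
      simpa [Set.star_singleton, (IsSelfAdjoint.star_mul_self n).star_eq] using hb
    exact Submodule.subset_span ⟨w, hw, n, hn, n, hn, (mul_assoc _ _ _).symm⟩
  have helemental : Set.MapsTo (n * ·) (NonUnitalStarAlgebra.elemental ℝ (star n * n))
      (closure M) := fun y hy =>
    map_mem_closure (continuous_const_mul n) hy fun z hz => hadjoin z hz
  exact closure_minimal helemental.image_subset isClosed_closure
    (mem_closure_mul_elemental_star_mul_self n)
end

section
/- Let A ⊆ B be a non-degenerate inclusion of C*-algebras, M ⊆ B a slice, and N ⊆ M a norm-closed linear subspace with A·N ⊆ N and N·A ⊆ N (a subslice). Then for every x ∈ M the following are equivalent: (i) x* n = 0 for all n ∈ N; (ii) x n* = 0 for all n ∈ N. In other words, the orthogonal complements of N in M with respect to the right inner product ⟨m,n⟩ = m*n and the left inner product ⟨⟨m,n⟩⟩ = mn* coincide. -/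
/-- For a non-degenerate inclusion `A ⊆ B` of C*-algebras, a slice `M ⊆ B` and a subslice
`N ⊆ M`, the orthogonal complements of `N` in `M` with respect to the right inner product
`⟨m,n⟩ = m*n` and the left inner product `⟨⟨m,n⟩⟩ = mn*` coincide: for `x ∈ M`, `x* n = 0`
for all `n ∈ N` if and only if `x n* = 0` for all `n ∈ N`. -/
theorem subslice_orthogonal_complements_agree {B : Type*} [NonUnitalCStarAlgebra B]
    (A : NonUnitalStarSubalgebra ℂ B) (hAc : IsClosed (A : Set B))
    (hnd : ∀ b : B, b ∈ closure {x : B | ∃ a ∈ A, x = a * b} ∧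
      b ∈ closure {x : B | ∃ a ∈ A, x = b * a})
    (M : Submodule ℂ B) (hMc : IsClosed (M : Set B))
    (hMnorm : ∀ m ∈ M, ∀ a ∈ A, star m * a * m ∈ A ∧ m * a * star m ∈ A)
    (hAM : ∀ a ∈ A, ∀ m ∈ M, a * m ∈ M)
    (hMA : ∀ m ∈ M, ∀ a ∈ A, m * a ∈ M)
    (N : Submodule ℂ B) (hNM : N ≤ M) (hNc : IsClosed (N : Set B))
    (hAN : ∀ a ∈ A, ∀ n ∈ N, a * n ∈ N)
    (hNA : ∀ n ∈ N, ∀ a ∈ A, n * a ∈ N) :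
    ∀ x ∈ M, ((∀ n ∈ N, star x * n = 0) ↔ (∀ n ∈ N, x * star n = 0)) := by
  -- polarization: mixed normaliser identities
  have polar1 : ∀ m ∈ M, ∀ m' ∈ M, ∀ a ∈ A, m * a * star m' ∈ A := by
    intro m hm m' hm' a ha
    have e : m * a * star m' = (4:ℂ)⁻¹ • (((m+m')*a*star (m+m')
        + Complex.I • ((m + Complex.I•m')*a*star (m + Complex.I•m')))
        - (m-m')*a*star (m-m')
        - Complex.I • ((m - Complex.I•m')*a*star (m - Complex.I•m'))) := by
      simp only [star_add, star_sub, star_smul, Complex.star_def, Complex.conj_I,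
        add_mul, mul_add, sub_mul, mul_sub, smul_mul_assoc, mul_smul_comm,
        smul_sub, smul_add, smul_smul, neg_smul, neg_neg, neg_mul, mul_neg]
      match_scalars <;> ring_nf <;> simp [Complex.I_sq] <;> norm_num
    rw [e]
    refine SMulMemClass.smul_mem _ (sub_mem (sub_mem (add_mem ?_ (SMulMemClass.smul_mem _ ?_)) ?_)
      (SMulMemClass.smul_mem _ ?_))
    · exact (hMnorm _ (M.add_mem hm hm') a ha).2
    · exact (hMnorm _ (M.add_mem hm (M.smul_mem _ hm')) a ha).2
    · exact (hMnorm _ (M.sub_mem hm hm') a ha).2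
    · exact (hMnorm _ (M.sub_mem hm (M.smul_mem _ hm')) a ha).2
  have polar2 : ∀ m ∈ M, ∀ m' ∈ M, ∀ a ∈ A, star m * a * m' ∈ A := by
    intro m hm m' hm' a ha
    have e : star m * a * m' = (4:ℂ)⁻¹ • ((star (m+m')*a*(m+m')
        - Complex.I • (star (m + Complex.I•m')*a*(m + Complex.I•m')))
        - star (m-m')*a*(m-m')
        + Complex.I • (star (m - Complex.I•m')*a*(m - Complex.I•m'))) := by
      simp only [star_add, star_sub, star_smul, Complex.star_def, Complex.conj_I,
        add_mul, mul_add, sub_mul, mul_sub, smul_mul_assoc, mul_smul_comm,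
        smul_sub, smul_add, smul_smul, neg_smul, neg_neg, neg_mul, mul_neg]
      match_scalars <;> ring_nf <;> simp [Complex.I_sq] <;> norm_num
    rw [e]
    refine SMulMemClass.smul_mem _ (add_mem (sub_mem (sub_mem ?_ (SMulMemClass.smul_mem _ ?_)) ?_)
      (SMulMemClass.smul_mem _ ?_))
    · exact (hMnorm _ (M.add_mem hm hm') a ha).1
    · exact (hMnorm _ (M.add_mem hm (M.smul_mem _ hm')) a ha).1
    · exact (hMnorm _ (M.sub_mem hm hm') a ha).1
    · exact (hMnorm _ (M.sub_mem hm (M.smul_mem _ hm')) a ha).1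
  -- products of slice elements land in A
  have memA1 : ∀ m ∈ M, ∀ m' ∈ M, m * star m' ∈ A := by
    intro m hm m' hm'
    have hmt : Set.MapsTo (fun u : B => u * star m')
        {u : B | ∃ a ∈ A, u = m * a} (A : Set B) := by
      rintro _ ⟨a, ha, rfl⟩
      simpa [mul_assoc] using polar1 m hm m' hm' a ha
    have := (hmt.closure (continuous_mul_right (star m'))) (hnd m).2
    rwa [hAc.closure_eq] at this
  have memA2 : ∀ m ∈ M, ∀ m' ∈ M, star m * m' ∈ A := by
    intro m hm m' hm'
    have hmt : Set.MapsTo (fun u : B => star m * u)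
        {u : B | ∃ a ∈ A, u = a * m'} (A : Set B) := by
      rintro _ ⟨a, ha, rfl⟩
      simpa [mul_assoc] using polar2 m hm m' hm' a ha
    have := (hmt.closure (continuous_mul_left (star m))) (hnd m').1
    rwa [hAc.closure_eq] at this
  intro x hx
  constructor
  · intro h n hn
    have hxnA : x * star n ∈ A := by
      simpa using star_mem (memA1 n (hNM hn) x hx)
    have hw : x * star n * n ∈ N := hAN _ hxnA n hn
    have hkey : star x * (x * star n * n) = 0 := h _ hw
    have hkey2 : ∀ w : B, star x * (x * (star n * (n * w))) = 0 := by
      intro w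
      have := congrArg (· * w) hkey
      simpa [mul_assoc] using this
    set y := x * star n with hy
    have h2 : (star y * y) * (star y * y) = 0 := by
      have e : (star y * y) * (star y * y)
          = n * (star x * (x * (star n * (n * (star x * (x * star n)))))) := by
        simp [hy, star_mul, mul_assoc]
      rw [e, hkey2, mul_zero]
    have h3 : star y * y = 0 := by
      refine (CStarRing.star_mul_self_eq_zero_iff _).mp ?_
      rw [star_mul, star_star]
      exact h2
    exact (CStarRing.star_mul_self_eq_zero_iff y).mp h3
  · intro h n hn
    have hsnxA : star n * x ∈ A := by
      simpa using star_mem (memA2 x hx n (hNM hn))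
    have hw : n * (star n * x) ∈ N := hNA n hn _ hsnxA
    have hkey : x * star (n * (star n * x)) = 0 := h _ hw
    have hkey2 : ∀ w : B, x * (star x * (n * (star n * w))) = 0 := by
      intro w
      have := congrArg (· * w) hkey
      simpa [star_mul, mul_assoc] using this
    set y := star x * n with hy
    have h2 : (y * star y) * (y * star y) = 0 := by
      have e : (y * star y) * (y * star y)
          = star x * (n * (star n * (x * (star x * (n * (star n * x)))))) := by
        simp [hy, star_mul, mul_assoc]
      rw [e, hkey2 x, mul_zero, mul_zero, mul_zero]
    have h3 : y * star y = 0 := by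
      refine (CStarRing.star_mul_self_eq_zero_iff _).mp ?_
      rw [star_mul, star_star]
      exact h2
    have h4 : star y = 0 := (CStarRing.star_mul_self_eq_zero_iff (star y)).mp (by rwa [star_star])
    exact star_eq_zero.mp h4
end
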